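/- arXiv:1810.00344 — 3 statements merged into one kernel-verified Lean document; each statement's English description precedes it below -/
import Mathlib

section
/- Let G be a totally ordered abelian group. For g, h ≥ 0 in G write g ≪ h if N·g < h for every natural number N. If 0 < g₁ ≪ g₂ ≪ g₃ ≪ ⋯ is a sequence in G, then the elements g₁, g₂, g₃, … are linearly independent over ℤ (no nontrivial finite integer combination vanishes). -/
/-!
The hypothesis `n • g i < g (i + 1)` says that the Archimedean classes of the `g i` strictly
decrease. Nonzero elements in pairwise distinct Archimedean classes are linearly independent:
a combination with nonzero coefficients lies in the class of its dominant term, which is not the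
class of `0`.
-/

open ArchimedeanClass

theorem linearIndependent_of_injective_archimedeanClass_mk
    {M : Type*} [AddCommGroup M] [LinearOrder M] [IsOrderedAddMonoid M]
    {K : Type*} [Ring K] [LinearOrder K] [IsOrderedRing K] [Archimedean K]
    [Module K M] [PosSMulMono K M] {ι : Type*} {v : ι → M}
    (hv : ∀ i, v i ≠ 0) (hmk : Function.Injective (mk ∘ v)) :
    LinearIndependent K v := by
  classical
  -- Ordering `ι` by the classes of the `v i` makes `mk_sum` applicable.
  let : LinearOrder ι := LinearOrder.lift' (mk ∘ v) hmk
  rw [linearIndependent_iff']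
  intro s c hsum i hi
  by_contra hci
  set t := s.filter (c · ≠ 0)
  have ht : t.Nonempty := ⟨i, Finset.mem_filter.mpr ⟨hi, hci⟩⟩
  have mk_smul_of_mem {j} (hj : j ∈ t) : mk (c j • v j) = mk (v j) :=
    mk_smul _ (Finset.mem_filter.mp hj).2
  have hsum_t : ∑ j ∈ t, c j • v j = 0 := by
    rwa [Finset.sum_filter_of_ne fun _ _ h ↦ left_ne_zero_of_smul h]
  have hmono : StrictMonoOn (mk ∘ fun j ↦ c j • v j) t := fun j hj k hk hjk ↦ by
    rw [Function.comp_apply, Function.comp_apply, mk_smul_of_mem hj, mk_smul_of_mem hk]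
    exact hjk
  have hmk_sum := mk_sum ht hmono
  rw [hsum_t, mk_zero, mk_smul_of_mem (t.min'_mem ht), eq_comm, mk_eq_top_iff] at hmk_sum
  exact hv _ hmk_sum

/-- In a linearly ordered abelian group, if `0 < g 0` and each `g i ≪ g (i+1)`
(meaning `n • g i < g (i+1)` for all naturals `n`), then the `g i` are
linearly independent over `ℤ`. -/
theorem stmt_0 {G : Type*} [AddCommGroup G] [LinearOrder G] [IsOrderedAddMonoid G] (g : ℕ → G)
    (h0 : 0 < g 0) (hll : ∀ i, ∀ n : ℕ, n • g i < g (i + 1)) :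
    LinearIndependent ℤ g := by
  have hmono : StrictMono g := strictMono_nat_of_lt_succ fun i ↦ by simpa using hll i 1
  have hpos i : 0 < g i := h0.trans_le (hmono.monotone i.zero_le)
  have hanti : StrictAnti (mk ∘ g) := strictAnti_nat_of_succ_lt fun i ↦
    mk_lt_mk.mpr fun n ↦ by simpa only [abs_of_pos (hpos _)] using hll i n
  exact linearIndependent_of_injective_archimedeanClass_mk (fun i ↦ (hpos i).ne') hanti.injective
end

section
/- Let G be a linearly ordered abelian group. Suppose (gᵢ)ᵢ∈ℕ is a sequence in G and (uᵢ)ᵢ∈ℕ, (vᵢ)ᵢ∈ℕ are sequences of positive elements such that gᵢ ≫ uᵢ, gᵢ is dominated by vᵢ, and vᵢ ≪ uᵢ₊₁ for all i. Then the gᵢ are linearly independent over ℤ. -/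
/-!
The hypotheses put the `g i` into pairwise distinct archimedean classes, each `g (i + 1)` being
infinitely larger than `g i`. In a nontrivial combination `∑ cᵢ • gᵢ` the nonzero term of largest
class dominates all others, so the sum lies in that class and in particular is not `0`.
-/

open ArchimedeanClass Function

namespace ArchimedeanClass

variable {M : Type*} [AddCommGroup M] [LinearOrder M] [IsOrderedAddMonoid M]

theorem mk_lt_mk_of_forall_nsmul_abs_lt {a b : M} (h : ∀ n : ℕ, n • |a| < b) : mk b < mk a := by
  have hb : 0 < b := by simpa using h 0
  exact mk_lt_mk.mpr fun n => by rw [abs_of_pos hb]; exact h n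

theorem linearIndependent_of_injective_mk {K : Type*} [Ring K] [LinearOrder K] [IsOrderedRing K]
    [Archimedean K] [Module K M] [PosSMulMono K M] {ι : Type*} {g : ι → M}
    (hinj : Injective (mk ∘ g)) (h0 : ∀ i, g i ≠ 0) : LinearIndependent K g := by
  -- Order `ι` by the classes of the `g i`, so that `mk_sum` applies.
  let : LinearOrder ι := LinearOrder.lift' _ hinj
  rw [linearIndependent_iff']
  intro s c hsum i hi
  by_contra hci
  set t := {j ∈ s | c j ≠ 0}
  have ht : t.Nonempty := ⟨i, Finset.mem_filter.mpr ⟨hi, hci⟩⟩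
  have hc : ∀ j ∈ t, mk (c j • g j) = mk (g j) := fun j hj => mk_smul _ (Finset.mem_filter.mp hj).2
  have hsum_t : ∑ j ∈ t, c j • g j = 0 := by
    rw [Finset.sum_filter_of_ne fun j _ hj => left_ne_zero_of_smul hj, hsum]
  have hmono : StrictMonoOn (mk ∘ fun j => c j • g j) t := fun a ha b hb hab => by
    rw [comp_apply, comp_apply, hc a ha, hc b hb]
    exact hab
  have := mk_sum ht hmono
  rw [hsum_t, mk_zero, hc _ (t.min'_mem ht), eq_comm, mk_eq_top_iff] at this
  exact h0 _ this

end ArchimedeanClass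

/-- If sequences `u i`, `v i` of positive elements satisfy `u i ≪ g i`,
`|g i| ≪ v i`, and `v i ≪ u (i+1)`, then the `g i` are linearly
independent over `ℤ`. -/
theorem stmt_3 {G : Type*} [AddCommGroup G] [LinearOrder G] [IsOrderedAddMonoid G]
    (g u v : ℕ → G) (hu : ∀ i, 0 < u i) (hv : ∀ i, 0 < v i)
    (hgu : ∀ i, ∀ n : ℕ, n • u i < g i)
    (hgv : ∀ i, ∀ n : ℕ, n • |g i| < v i)
    (hvu : ∀ i, ∀ n : ℕ, n • v i < u (i + 1)) :
    LinearIndependent ℤ g := by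
  have hgu' i : mk (g i) < mk (u i) :=
    mk_lt_mk_of_forall_nsmul_abs_lt (by simpa only [abs_of_pos (hu i)] using hgu i)
  have hanti : StrictAnti (mk ∘ g) := strictAnti_nat_of_succ_lt fun i => calc
    mk (g (i + 1)) < mk (u (i + 1)) := hgu' (i + 1)
    _ < mk (v i) :=
      mk_lt_mk_of_forall_nsmul_abs_lt (by simpa only [abs_of_pos (hv i)] using hvu i)
    _ < mk (g i) := mk_lt_mk_of_forall_nsmul_abs_lt (hgv i)
  exact linearIndependent_of_injective_mk hanti.injective fun i hgi =>
    (hgu' i).ne_top (mk_eq_top_iff.mpr hgi)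
end

section
/- Let p, q be coprime positive integers with 2 ≤ p < q, and S = ⟨p, q⟩ the numerical semigroup they generate. Then (1 - t) · Σ_{s ∈ S, s ≤ (p-1)(q-1)} t^s + t^{(p-1)(q-1)+1} · (1-t) · (1 + t + t² + ⋯ continued formally) equals the Alexander polynomial of the (p,q) torus knot; equivalently, as polynomials: (1 - t) · Σ_{s ∈ S, s < (p-1)(q-1)} t^s + t^{(p-1)(q-1)} = (t^{pq} - 1)(t - 1) / ((t^p - 1)(t^q - 1)). -/
open Polynomial
open scoped Classical

/-!
Let `H = Σ_{s ∈ S} tˢ` in `ℤ⟦t⟧`. Every `n ≥ (p-1)(q-1)` lies in `S` (Chicken McNugget), so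
`(1 - t) H` is the polynomial on the left-hand side. The Apéry set `S \ (q + S)` is
`{0, p, …, (q-1)p}`, so `(1 - t^q) H = Σ_{x<q} t^{px}`, and `(t^p - 1) Σ_{x<q} t^{px} = t^{pq} - 1`.
Eliminating `H` between these identities gives the result.
-/

noncomputable def indicatorSeries (R : Type*) [Semiring R] (S : Set ℕ) : PowerSeries R :=
  PowerSeries.mk (S.indicator 1)

def aperySet (S : AddSubmonoid ℕ) (q : ℕ) : Set ℕ := {n | n ∈ S ∧ ∀ m ∈ S, m + q ≠ n}

section IndicatorSeries

variable {R : Type*} [CommRing R]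

@[simp]
theorem coeff_indicatorSeries (S : Set ℕ) (n : ℕ) :
    PowerSeries.coeff n (indicatorSeries R S) = S.indicator 1 n :=
  PowerSeries.coeff_mk _ _

theorem indicatorSeries_coe_finset (s : Finset ℕ) :
    indicatorSeries R (s : Set ℕ) = ((∑ n ∈ s, X ^ n : R[X]) : PowerSeries R) := by
  ext n
  simp [Polynomial.coeff_coe, Set.indicator_apply]

theorem indicatorSeries_eq_add_X_pow_mul_mk_one {S : Set ℕ} {c : ℕ}
    (hS : ∀ n, c ≤ n → n ∈ S) :
    indicatorSeries R S = indicatorSeries R ↑({n ∈ Finset.range c | n ∈ S}) +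
      PowerSeries.X ^ c * PowerSeries.mk 1 := by
  ext n
  rw [map_add, PowerSeries.coeff_X_pow_mul']
  by_cases hn : c ≤ n
  · simp [hn, hS n hn]
  · simp [Set.indicator_apply, hn, show n < c by omega]

theorem one_sub_X_mul_indicatorSeries {S : Set ℕ} {c : ℕ} (hS : ∀ n, c ≤ n → n ∈ S) :
    (1 - PowerSeries.X) * indicatorSeries R S =
      (((1 - X) * ∑ s ∈ Finset.range c with s ∈ S, X ^ s + X ^ c : R[X]) :
        PowerSeries R) := by
  rw [indicatorSeries_eq_add_X_pow_mul_mk_one hS, indicatorSeries_coe_finset, mul_add,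
    mul_left_comm, mul_comm _ (PowerSeries.mk 1), PowerSeries.mk_one_mul_one_sub_eq_one, mul_one]
  simp only [Polynomial.coe_add, Polynomial.coe_mul, Polynomial.coe_sub, Polynomial.coe_one,
    Polynomial.coe_X, Polynomial.coe_pow]

theorem one_sub_X_pow_mul_indicatorSeries {S : AddSubmonoid ℕ} {q : ℕ} (hq : q ∈ S) :
    (1 - PowerSeries.X ^ q) * indicatorSeries R S = indicatorSeries R (aperySet S q) := by
  ext n
  have hshift : (∀ m ∈ S, m + q ≠ n) ↔ ¬(q ≤ n ∧ n - q ∈ S) :=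
    ⟨fun h ⟨hqn, hm⟩ => h _ hm (Nat.sub_add_cancel hqn),
      fun h m hm hmn => h ⟨by omega, by rwa [← hmn, Nat.add_sub_cancel]⟩⟩
  have hmem : q ≤ n → n - q ∈ S → n ∈ S := fun hqn hm => by
    simpa [Nat.sub_add_cancel hqn] using S.add_mem hm hq
  rw [sub_mul, one_mul, map_sub, PowerSeries.coeff_X_pow_mul']
  simp only [coeff_indicatorSeries, aperySet, Set.indicator_apply, Pi.one_apply,
    SetLike.mem_coe, Set.mem_ofPred_eq, hshift]
  by_cases hn : n ∈ S <;> by_cases hqn : q ≤ n <;> by_cases hm : n - q ∈ S <;> simp_all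

end IndicatorSeries

theorem Nat.mem_closure_pair_of_pred_mul_pred_le {p q n : ℕ} (hco : Nat.Coprime p q)
    (hn : (p - 1) * (q - 1) ≤ n) : n ∈ AddSubmonoid.closure ({p, q} : Set ℕ) := by
  obtain ⟨a, b, rfl⟩ := Nat.exists_add_mul_eq_of_gcd_dvd_of_mul_pred_le p q n
    (by simp [hco.gcd_eq_one]) (by simpa using hn)
  exact (AddSubmonoid.mem_closure_pair _ _ _).2 ⟨a, b, by simp⟩

theorem Nat.Coprime.eq_zero_of_mul_add_mul_eq {p q a b x : ℕ} (hco : Nat.Coprime p q)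
    (hp : 0 < p) (hx : x < q) (h : a * p + b * q = p * x) : b = 0 := by
  have hax : a ≤ x := le_of_mul_le_mul_left (by rw [mul_comm p a]; omega) hp
  have hdvd : q ∣ x - a := hco.symm.dvd_of_dvd_mul_left
    ⟨b, by rw [Nat.mul_sub, ← h]; simp [mul_comm]⟩
  obtain rfl : x = a := by
    have := Nat.eq_zero_of_dvd_of_lt hdvd (by omega)
    omega
  have hbq : b * q = 0 := by rw [mul_comm p x] at h; omega
  exact (Nat.mul_eq_zero.mp hbq).resolve_right (by omega)

theorem aperySet_closure_pair {p q : ℕ} (hco : Nat.Coprime p q) (hp : 0 < p) :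
    aperySet (AddSubmonoid.closure {p, q}) q = ↑((Finset.range q).image (p * ·)) := by
  ext n
  simp only [aperySet, AddSubmonoid.mem_closure_pair, smul_eq_mul, Finset.coe_image,
    Finset.coe_range, Set.mem_image, Set.mem_Iio, Set.mem_ofPred_eq]
  constructor
  · rintro ⟨⟨a, b, rfl⟩, hmin⟩
    obtain _ | b := b
    · obtain ⟨k, rfl⟩ | ha := (le_or_gt q a).imp Nat.exists_eq_add_of_le id
      · obtain ⟨p, rfl⟩ := Nat.exists_eq_add_of_lt hp
        exact absurd (by ring) (hmin _ ⟨k, p, rfl⟩)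
      · exact ⟨a, ha, by ring⟩
    · exact absurd (by ring) (hmin _ ⟨a, b, rfl⟩)
  · rintro ⟨x, hx, rfl⟩
    refine ⟨⟨x, 0, by ring⟩, ?_⟩
    rintro m ⟨a, b, rfl⟩ h
    have := hco.eq_zero_of_mul_add_mul_eq hp hx (a := a) (b := b + 1) (by rw [← h]; ring)
    omega

theorem stmt_7_general (p q : ℕ) (hp : 2 ≤ p) (hco : Nat.Coprime p q) :
    ((1 - X) * (∑ s ∈ Finset.range ((p - 1) * (q - 1)),
        if s ∈ AddSubmonoid.closure ({p, q} : Set ℕ) then X ^ s else 0) +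
      X ^ ((p - 1) * (q - 1))) * ((X ^ p - 1) * (X ^ q - 1)) =
    (X ^ (p * q) - 1) * (X - (1 : Polynomial ℤ)) := by
  set S := AddSubmonoid.closure ({p, q} : Set ℕ)
  have hconductor := one_sub_X_mul_indicatorSeries (R := ℤ) (S := S)
    fun _ => Nat.mem_closure_pair_of_pred_mul_pred_le hco
  simp only [SetLike.mem_coe] at hconductor
  have hapery : (1 - PowerSeries.X ^ q) * indicatorSeries ℤ S =
      ((∑ x ∈ Finset.range q, (X ^ p) ^ x : ℤ[X]) : PowerSeries ℤ) := by
    rw [one_sub_X_pow_mul_indicatorSeries (AddSubmonoid.subset_closure (by simp)),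
      aperySet_closure_pair hco (by omega), indicatorSeries_coe_finset,
      Finset.sum_image fun _ _ _ _ h => Nat.eq_of_mul_eq_mul_left (by omega) h]
    simp_rw [pow_mul]
  have hgeom := congrArg ((↑) : ℤ[X] → PowerSeries ℤ) (geom_sum_mul (X ^ p : ℤ[X]) q)
  rw [← Finset.sum_filter, ← Polynomial.coe_inj, Polynomial.coe_mul, ← hconductor]
  push_cast at hapery hgeom ⊢
  linear_combination (PowerSeries.X - 1) * (PowerSeries.X ^ p - 1) * hapery +
    (PowerSeries.X - 1) * hgeom

/-- The semigroup identity for the Alexander polynomial of the torus knot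
`T_{p,q}`: as polynomials over `ℤ`,
`((1 - t) · Σ_{s ∈ S, s < (p-1)(q-1)} t^s + t^{(p-1)(q-1)}) · (t^p - 1)(t^q - 1)
 = (t^{pq} - 1)(t - 1)`. -/
theorem stmt_7 (p q : ℕ) (hp : 2 ≤ p) (hpq : p < q) (hco : Nat.Coprime p q) :
    ((1 - X) * (∑ s ∈ Finset.range ((p - 1) * (q - 1)),
        if s ∈ AddSubmonoid.closure ({p, q} : Set ℕ) then X ^ s else 0) +
      X ^ ((p - 1) * (q - 1))) * ((X ^ p - 1) * (X ^ q - 1)) =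
    (X ^ (p * q) - 1) * (X - (1 : Polynomial ℤ)) :=
  stmt_7_general p q hp hco
end
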